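/- arXiv:math/0106100 — 4 statements merged into one kernel-verified Lean document; each statement's English description precedes it below -/
import Mathlib

section
/- No two distinct quasi-congruence classes are near each other; hence any set of natural numbers is near at most one quasi-congruence class. -/
def Near (x y : Set ℕ) : Prop := (x \ y).Finite ∧ (y \ x).Finite

def CongClass (n m : ℕ) : Set ℕ := {j | ∃ k, j = k * n + m}

def IsQuasiCong (x : Set ℕ) : Prop :=
  ∃ n > 0, ∃ S : Finset ℕ, (∀ m ∈ S, m < n) ∧ x = ⋃ m ∈ S, CongClass n m

lemma qc_period {x : Set ℕ} (h : IsQuasiCong x) :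
    ∃ n > 0, ∀ a, a ∈ x ↔ a + n ∈ x := by
  obtain ⟨n, hn, S, hS, rfl⟩ := h
  refine ⟨n, hn, fun a => ?_⟩
  simp only [Set.mem_iUnion, CongClass, Set.mem_setOf_eq]
  constructor
  · rintro ⟨m, hm, k, rfl⟩
    exact ⟨m, hm, k + 1, by ring⟩
  · rintro ⟨m, hm, k, hk⟩
    have hmn := hS m hm
    match k with
    | 0 => omega
    | k + 1 =>
      refine ⟨m, hm, k, ?_⟩
      rw [Nat.succ_mul] at hk
      omega

lemma period_iter {x : Set ℕ} {n : ℕ} (h : ∀ a, a ∈ x ↔ a + n ∈ x) :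
    ∀ k a, a ∈ x ↔ a + k * n ∈ x := by
  intro k
  induction k with
  | zero => simp
  | succ k ih =>
    intro a
    have e : a + (k + 1) * n = a + k * n + n := by ring
    rw [e, ← h (a + k * n)]
    exact ih a

lemma qc_not_near {x y : Set ℕ} (hx : IsQuasiCong x) (hy : IsQuasiCong y)
    (hne : x ≠ y) : ¬ Near x y := by
  obtain ⟨n₁, hn₁, p₁⟩ := qc_period hx
  obtain ⟨n₂, hn₂, p₂⟩ := qc_period hy
  set N := n₁ * n₂ with hN
  have hNpos : 0 < N := Nat.mul_pos hn₁ hn₂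
  have hxN : ∀ a, a ∈ x ↔ a + N ∈ x := by
    intro a; rw [hN, mul_comm]; exact period_iter p₁ n₂ a
  have hyN : ∀ a, a ∈ y ↔ a + N ∈ y := fun a => period_iter p₂ n₁ a
  have hane : ∃ a, (a ∈ x ∧ a ∉ y) ∨ (a ∈ y ∧ a ∉ x) := by
    by_contra hc
    push_neg at hc
    apply hne
    ext a
    have := hc a
    tauto
  obtain ⟨a, hcase⟩ := hane
  rintro ⟨hfin1, hfin2⟩
  have hinj : Function.Injective (fun k : ℕ => a + k * N) := by
    intro i j hij
    simp only at hij
    exact Nat.eq_of_mul_eq_mul_right hNpos (by omega)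
  rcases hcase with ⟨hax, hay⟩ | ⟨hay, hax⟩
  · have : (x \ y).Infinite := by
      apply Set.infinite_of_injective_forall_mem hinj
      intro k
      exact ⟨(period_iter hxN k a).mp hax, fun hc => hay ((period_iter hyN k a).mpr hc)⟩
    exact this hfin1
  · have : (y \ x).Infinite := by
      apply Set.infinite_of_injective_forall_mem hinj
      intro k
      exact ⟨(period_iter hyN k a).mp hay, fun hc => hax ((period_iter hxN k a).mpr hc)⟩
    exact this hfin2

theorem quasiCong_near_unique :
    (∀ x y : Set ℕ, IsQuasiCong x → IsQuasiCong y → x ≠ y → ¬ Near x y) ∧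
    (∀ z x y : Set ℕ, IsQuasiCong x → IsQuasiCong y → Near z x → Near z y → x = y) := by
  constructor
  · exact fun x y hx hy hne => qc_not_near hx hy hne
  · intro z x y hx hy ⟨h1, h2⟩ ⟨h3, h4⟩
    by_contra hne
    apply qc_not_near hx hy hne
    constructor
    · exact ((h2.union h3).subset (fun a ⟨hax, hay⟩ => by
        by_cases haz : a ∈ z
        · exact Or.inr ⟨haz, hay⟩
        · exact Or.inl ⟨hax, haz⟩))
    · exact ((h4.union h1).subset (fun a ⟨hay, hax⟩ => by
        by_cases haz : a ∈ z
        · exact Or.inr ⟨haz, hax⟩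
        · exact Or.inl ⟨hay, haz⟩))
end

section
/- The collection Qₙ of all sets of natural numbers that are near some n-quasi-congruence class is closed under union, intersection, and complementation (in ℕ), contains ℕ and ∅, and contains all singletons; i.e., it forms an atomic Boolean algebra of sets. -/
def IsQuasiCongOf (n : ℕ) (x : Set ℕ) : Prop :=
  ∃ S : Finset ℕ, (∀ m ∈ S, m < n) ∧ x = ⋃ m ∈ S, CongClass n m

def Qset (n : ℕ) : Set (Set ℕ) := {x | ∃ y, IsQuasiCongOf n y ∧ Near x y}

lemma mem_CongClass {n m : ℕ} (hm : m < n) (j : ℕ) :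
    j ∈ CongClass n m ↔ j % n = m := by
  constructor
  · rintro ⟨k, rfl⟩
    rw [Nat.add_comm, Nat.add_mul_mod_self_right, Nat.mod_eq_of_lt hm]
  · intro h
    refine ⟨j / n, ?_⟩
    rw [← h]
    rw [Nat.mul_comm]
    exact (Nat.div_add_mod j n).symm

lemma near_refl (x : Set ℕ) : Near x x := by
  simp [Near]

lemma near_union {x y x' y' : Set ℕ} (h : Near x y) (h' : Near x' y') :
    Near (x ∪ x') (y ∪ y') := by
  constructor
  · exact (h.1.union h'.1).subset (by intro a ha; simp at ha ⊢; tauto)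
  · exact (h.2.union h'.2).subset (by intro a ha; simp at ha ⊢; tauto)

lemma near_inter {x y x' y' : Set ℕ} (h : Near x y) (h' : Near x' y') :
    Near (x ∩ x') (y ∩ y') := by
  constructor
  · exact (h.1.union h'.1).subset (by intro a ha; simp at ha ⊢; tauto)
  · exact (h.2.union h'.2).subset (by intro a ha; simp at ha ⊢; tauto)

lemma near_compl {x y : Set ℕ} (h : Near x y) :
    Near (Set.univ \ x) (Set.univ \ y) := by
  constructor
  · exact h.2.subset (by intro a ha; simp at ha ⊢; tauto)
  · exact h.1.subset (by intro a ha; simp at ha ⊢; tauto)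

theorem Qset_boolean_algebra (n : ℕ) (hn : 0 < n) :
    (∀ x ∈ Qset n, ∀ y ∈ Qset n, x ∪ y ∈ Qset n) ∧
    (∀ x ∈ Qset n, ∀ y ∈ Qset n, x ∩ y ∈ Qset n) ∧
    (∀ x ∈ Qset n, Set.univ \ x ∈ Qset n) ∧
    (Set.univ ∈ Qset n) ∧ (∅ ∈ Qset n) ∧
    (∀ k : ℕ, {k} ∈ Qset n) := by
  have huniv : Set.univ = ⋃ m ∈ Finset.range n, CongClass n m := by
    ext j
    simp only [Set.mem_univ, true_iff, Set.mem_iUnion, Finset.mem_range]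
    exact ⟨j % n, Nat.mod_lt j hn, (mem_CongClass (Nat.mod_lt j hn) j).2 rfl⟩
  refine ⟨?_, ?_, ?_, ?_, ?_, ?_⟩
  · rintro x ⟨a, ⟨S, hS, rfl⟩, hxa⟩ y ⟨b, ⟨T, hT, rfl⟩, hyb⟩
    refine ⟨⋃ m ∈ (S ∪ T : Finset ℕ), CongClass n m,
      ⟨S ∪ T, fun m hm => ?_, rfl⟩, ?_⟩
    · rcases Finset.mem_union.1 hm with h | h
      exacts [hS m h, hT m h]
    · have : (⋃ m ∈ (S ∪ T : Finset ℕ), CongClass n m) =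
        (⋃ m ∈ S, CongClass n m) ∪ ⋃ m ∈ T, CongClass n m := by
        ext j
        simp only [Set.mem_iUnion, Set.mem_union, Finset.mem_union]
        constructor
        · rintro ⟨m, h | h, hj⟩
          exacts [Or.inl ⟨m, h, hj⟩, Or.inr ⟨m, h, hj⟩]
        · rintro (⟨m, h, hj⟩ | ⟨m, h, hj⟩)
          exacts [⟨m, Or.inl h, hj⟩, ⟨m, Or.inr h, hj⟩]
      rw [this]
      exact near_union hxa hyb
  · rintro x ⟨a, ⟨S, hS, rfl⟩, hxa⟩ y ⟨b, ⟨T, hT, rfl⟩, hyb⟩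
    refine ⟨⋃ m ∈ (S ∩ T : Finset ℕ), CongClass n m,
      ⟨S ∩ T, fun m hm => hS m (Finset.mem_inter.1 hm).1, rfl⟩, ?_⟩
    have : (⋃ m ∈ (S ∩ T : Finset ℕ), CongClass n m) =
        (⋃ m ∈ S, CongClass n m) ∩ ⋃ m ∈ T, CongClass n m := by
      ext j
      simp only [Set.mem_iUnion, Set.mem_inter_iff, Finset.mem_inter]
      constructor
      · rintro ⟨m, ⟨h1, h2⟩, hj⟩
        exact ⟨⟨m, h1, hj⟩, ⟨m, h2, hj⟩⟩
      · rintro ⟨⟨m, h1, hj⟩, ⟨m', h2, hj'⟩⟩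
        have := (mem_CongClass (hS m h1) j).1 hj
        have := (mem_CongClass (hT m' h2) j).1 hj'
        have : m = m' := by omega
        subst this
        exact ⟨m, ⟨h1, h2⟩, hj⟩
    rw [this]
    exact near_inter hxa hyb
  · rintro x ⟨a, ⟨S, hS, rfl⟩, hxa⟩
    refine ⟨⋃ m ∈ (Finset.range n \ S : Finset ℕ), CongClass n m,
      ⟨Finset.range n \ S, fun m hm =>
        Finset.mem_range.1 (Finset.mem_sdiff.1 hm).1, rfl⟩, ?_⟩
    have : (⋃ m ∈ (Finset.range n \ S : Finset ℕ), CongClass n m) =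
        Set.univ \ ⋃ m ∈ S, CongClass n m := by
      ext j
      simp only [Set.mem_iUnion, Set.mem_diff, Set.mem_univ, true_and,
        Finset.mem_sdiff, Finset.mem_range]
      constructor
      · rintro ⟨m, ⟨hmn, hmS⟩, hj⟩
        rw [mem_CongClass hmn] at hj
        rintro ⟨m', hm', hj'⟩
        rw [mem_CongClass (hS m' hm')] at hj'
        exact hmS (by rwa [← hj', hj] at hm')
      · intro h
        refine ⟨j % n, ⟨Nat.mod_lt j hn, fun hjS => h ⟨j % n, hjS, ?_⟩⟩, ?_⟩
        · exact (mem_CongClass (Nat.mod_lt j hn) j).2 rfl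
        · exact (mem_CongClass (Nat.mod_lt j hn) j).2 rfl
    rw [this]
    exact near_compl hxa
  · exact ⟨Set.univ, ⟨Finset.range n, fun m hm => Finset.mem_range.1 hm, huniv⟩,
      near_refl _⟩
  · exact ⟨∅, ⟨∅, by simp, by simp⟩, near_refl _⟩
  · intro k
    exact ⟨∅, ⟨∅, by simp, by simp⟩, by simp [Near]⟩
end

section
/- If the density of x in z₁ is strictly less than the density of y in z₁, and both x and y have densities in z₂, then the density of x in z₂ is at most the density of y in z₂. -/
open Filter

theorem density_le_of_density_lt (x y z₁ z₂ : Set ℕ)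
    (hx₁ : x ⊆ z₁) (hy₁ : y ⊆ z₁) (hz₁ : z₁.Infinite)
    (hx₂ : x ⊆ z₂) (hy₂ : y ⊆ z₂) (hz₂ : z₂.Infinite)
    (r₁ s₁ r₂ s₂ : ℝ)
    (hxr₁ : Tendsto (fun k : ℕ => ((x ∩ Set.Iic k).ncard : ℝ) / ((z₁ ∩ Set.Iic k).ncard : ℝ))
      atTop (nhds r₁))
    (hys₁ : Tendsto (fun k : ℕ => ((y ∩ Set.Iic k).ncard : ℝ) / ((z₁ ∩ Set.Iic k).ncard : ℝ))
      atTop (nhds s₁))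
    (hxr₂ : Tendsto (fun k : ℕ => ((x ∩ Set.Iic k).ncard : ℝ) / ((z₂ ∩ Set.Iic k).ncard : ℝ))
      atTop (nhds r₂))
    (hys₂ : Tendsto (fun k : ℕ => ((y ∩ Set.Iic k).ncard : ℝ) / ((z₂ ∩ Set.Iic k).ncard : ℝ))
      atTop (nhds s₂))
    (h : r₁ < s₁) : r₂ ≤ s₂ := by
  have hev : ∀ᶠ k : ℕ in atTop,
      ((x ∩ Set.Iic k).ncard : ℝ) / ((z₁ ∩ Set.Iic k).ncard : ℝ)
        < ((y ∩ Set.Iic k).ncard : ℝ) / ((z₁ ∩ Set.Iic k).ncard : ℝ) :=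
    hxr₁.eventually_lt hys₁ h
  obtain ⟨n, hn⟩ := hz₁.nonempty
  refine le_of_tendsto_of_tendsto hxr₂ hys₂ ?_
  filter_upwards [hev, eventually_ge_atTop n] with k hk hkn
  have hd : (0 : ℝ) < ((z₁ ∩ Set.Iic k).ncard : ℝ) := by
    have hne : (z₁ ∩ Set.Iic k).Nonempty := ⟨n, hn, hkn⟩
    have hfin : (z₁ ∩ Set.Iic k).Finite := (Set.finite_Iic k).inter_of_right _
    exact_mod_cast hne.ncard_pos hfin
  have hle : ((x ∩ Set.Iic k).ncard : ℝ) ≤ ((y ∩ Set.Iic k).ncard : ℝ) :=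
    le_of_lt ((div_lt_div_iff_of_pos_right hd).mp hk)
  have h2 : (0 : ℝ) ≤ (((z₂ ∩ Set.Iic k).ncard : ℝ))⁻¹ := by positivity
  simpa [div_eq_mul_inv] using mul_le_mul_of_nonneg_right hle h2
end

section
/- If neither x outpaces y nor y outpaces x, then there is a non-principal ultrafilter 𝒰 on ℕ containing the set {k : |x ∩ {0,…,k}| = |y ∩ {0,…,k}|}; consequently x ≈ y in the 𝒰-induced size ordering. -/
def Outpaces (x y : Set ℕ) : Prop :=
  ∃ n : ℕ, ∀ m > n, (x ∩ Set.Iic m).ncard > (y ∩ Set.Iic m).ncard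

private lemma count_mono (x : Set ℕ) (k : ℕ) :
    (x ∩ Set.Iic k).ncard ≤ (x ∩ Set.Iic (k+1)).ncard := by
  apply Set.ncard_le_ncard
  · exact Set.inter_subset_inter_right _ (Set.Iic_subset_Iic.2 (Nat.le_succ k))
  · exact (Set.finite_Iic _).inter_of_right _

private lemma count_step (x : Set ℕ) (k : ℕ) :
    (x ∩ Set.Iic (k+1)).ncard ≤ (x ∩ Set.Iic k).ncard + 1 := by
  have hsub : x ∩ Set.Iic (k+1) ⊆ (x ∩ Set.Iic k) ∪ {k+1} := by
    rintro a ⟨hax, ha⟩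
    rcases Nat.lt_or_ge a (k+1) with h | h
    · exact Or.inl ⟨hax, Nat.lt_succ_iff.mp h⟩
    · exact Or.inr (le_antisymm (by exact ha) h)
  calc (x ∩ Set.Iic (k+1)).ncard ≤ ((x ∩ Set.Iic k) ∪ {k+1}).ncard :=
        Set.ncard_le_ncard hsub (((Set.finite_Iic _).inter_of_right _).union (Set.finite_singleton _))
    _ ≤ (x ∩ Set.Iic k).ncard + ({k+1} : Set ℕ).ncard :=
        Set.ncard_union_le _ _
    _ = (x ∩ Set.Iic k).ncard + 1 := by rw [Set.ncard_singleton]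

theorem exists_ultrafilter_eqsize (x y : Set ℕ)
    (h₁ : ¬ Outpaces x y) (h₂ : ¬ Outpaces y x) :
    ∃ 𝒰 : Ultrafilter ℕ, (∀ s : Set ℕ, s.Finite → s ∉ 𝒰) ∧
      {k : ℕ | (x ∩ Set.Iic k).ncard = (y ∩ Set.Iic k).ncard} ∈ 𝒰 := by
  set E := {k : ℕ | (x ∩ Set.Iic k).ncard = (y ∩ Set.Iic k).ncard} with hE
  have hEinf : E.Infinite := by
    by_contra hfin
    rw [Set.not_infinite] at hfin
    obtain ⟨N, hN⟩ := hfin.bddAbove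
    have hne : ∀ k > N, (x ∩ Set.Iic k).ncard ≠ (y ∩ Set.Iic k).ncard := by
      intro k hk h
      exact absurd (hN h) (not_le.2 hk)
    -- sign propagation
    have key : ∀ a b : Set ℕ, (∀ k > N, (a ∩ Set.Iic k).ncard ≠ (b ∩ Set.Iic k).ncard) →
        (a ∩ Set.Iic (N+1)).ncard > (b ∩ Set.Iic (N+1)).ncard → Outpaces a b := by
      intro a b hne h0
      refine ⟨N, ?_⟩
      intro m hm
      obtain ⟨j, rfl⟩ := Nat.exists_eq_add_of_lt hm
      clear hm
      induction j with
      | zero => simpa using h0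
      | succ j ih =>
        have hj : (a ∩ Set.Iic (N + j + 1)).ncard > (b ∩ Set.Iic (N + j + 1)).ncard := ih
        have h1 := count_mono a (N + j + 1)
        have h2 := count_step b (N + j + 1)
        have hge : (a ∩ Set.Iic (N + (j+1) + 1)).ncard ≥ (b ∩ Set.Iic (N + (j+1) + 1)).ncard := by
          have : N + (j+1) + 1 = (N + j + 1) + 1 := by ring
          rw [this]
          omega
        have hne' := hne (N + (j+1) + 1) (by omega)
        omega
    rcases Nat.lt_trichotomy ((x ∩ Set.Iic (N+1)).ncard) ((y ∩ Set.Iic (N+1)).ncard) with h | h | h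
    · exact h₂ (key y x (fun k hk h => hne k hk h.symm) h)
    · exact hne (N+1) (Nat.lt_succ_self N) h
    · exact h₁ (key x y hne h)
  haveI : (Filter.cofinite ⊓ Filter.principal E).NeBot :=
    Filter.cofinite_inf_principal_neBot_iff.mpr hEinf
  set F := Filter.cofinite ⊓ Filter.principal E with hF
  set U := Ultrafilter.of F with hU
  have hle : (U : Filter ℕ) ≤ F := Ultrafilter.of_le F
  refine ⟨U, ?_, ?_⟩
  · intro s hs hmem
    have hc : sᶜ ∈ U := hle (Filter.mem_inf_of_left hs.compl_mem_cofinite)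
    have : s ∩ sᶜ ∈ U := Filter.inter_mem hmem hc
    rw [Set.inter_compl_self] at this
    exact Filter.empty_notMem (U : Filter ℕ) this
  · exact hle (Filter.mem_inf_of_right (Filter.mem_principal_self E))
end
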